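/- arXiv:1412.2644 — 4 statements merged into one kernel-verified Lean document; each statement's English description precedes it below -/
import Mathlib

section
/- Let A > 1, M ∈ (0, A−1), γ = A^(−1/2), p, q real with |p| ≥ A, |q| ≤ M, and let B be the symmetric matrix with B₁₁ = γ²p², B₁₂ = B₂₁ = γpq, B₂₂ = 1/γ² + q². Then trace(B) ≥ 2s⁻² and det(B) ≥ s⁻²(trace(B) − s⁻²), where s = ((2A + M² − M√(M²+4A))/2)^(−1/2). -/
/-!
With `γ = A^{-1/2}` one has `tr B = p²/A + A + q²` and `det B = p²`, while `t := s⁻²` is the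
smaller root of `x² - (2A + M²) x + A² = 0`, so `0 < t ≤ A`. The trace bound follows from
`p²/A ≥ A ≥ t`. Eliminating `t²` with the quadratic equation,
`det B - t (tr B - t) = (p² - A²)(1 - t/A) + t (M² - q²) ≥ 0`.
-/

open Real

lemma rpow_neg_half_sq {x : ℝ} (hx : 0 ≤ x) : (x ^ (-(1/2) : ℝ)) ^ 2 = x⁻¹ := by
  rw [← rpow_natCast, ← rpow_mul hx]
  norm_num [rpow_neg_one]

lemma inv_rpow_neg_half_sq {x : ℝ} (hx : 0 ≤ x) : ((x ^ (-(1/2) : ℝ))⁻¹) ^ 2 = x := by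
  rw [inv_pow, rpow_neg_half_sq hx, inv_inv]

lemma trace_fin_two_gamma (γ p q : ℝ) :
    (!![γ^2 * p^2, γ * p * q; γ * p * q, 1/γ^2 + q^2]).trace = γ^2 * p^2 + 1/γ^2 + q^2 := by
  rw [Matrix.trace_fin_two_of]
  ring

lemma det_fin_two_gamma {γ : ℝ} (hγ : γ ≠ 0) (p q : ℝ) :
    (!![γ^2 * p^2, γ * p * q; γ * p * q, 1/γ^2 + q^2]).det = p^2 := by
  rw [Matrix.det_fin_two_of]
  field_simp
  ring

section LowerRoot

variable {A M : ℝ}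

/-- The smaller root of `x² - (2A + M²) x + A²`. -/
noncomputable def lowerRoot (A M : ℝ) : ℝ := (2*A + M^2 - M * √(M^2 + 4*A)) / 2

lemma lowerRoot_sq (h : 0 ≤ M^2 + 4*A) :
    lowerRoot A M ^ 2 = (2*A + M^2) * lowerRoot A M - A^2 := by
  have hr := sq_sqrt h
  unfold lowerRoot
  linear_combination (M^2 / 4) * hr

lemma lowerRoot_pos (hA : 0 < A) : 0 < lowerRoot A M := by
  have hr := sq_sqrt (show 0 ≤ M^2 + 4*A by positivity)
  have hMr : M * √(M^2 + 4*A) < 2*A + M^2 := by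
    refine (abs_lt_of_sq_lt_sq' ?_ (by positivity)).2
    rw [mul_pow, hr]
    nlinarith
  unfold lowerRoot
  linarith

lemma lowerRoot_le (hA : 0 < A) (hM : 0 ≤ M) : lowerRoot A M ≤ A := by
  have hMr : M ≤ √(M^2 + 4*A) := le_sqrt_of_sq_le (by linarith)
  unfold lowerRoot
  nlinarith

end LowerRoot

section Bounds

variable {A M t p q : ℝ}

lemma two_mul_le_trace (hA : 0 < A) (ht : t ≤ A) (hp : A^2 ≤ p^2) :
    2 * t ≤ p^2 / A + A + q^2 := by
  have hAp : A ≤ p^2 / A := by rw [le_div_iff₀ hA]; nlinarith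
  nlinarith [sq_nonneg q]

lemma mul_trace_sub_le_det (hA : 0 < A) (ht0 : 0 < t) (htA : t ≤ A)
    (ht : t^2 = (2*A + M^2) * t - A^2) (hp : A^2 ≤ p^2) (hq : q^2 ≤ M^2) :
    t * (p^2 / A + A + q^2 - t) ≤ p^2 := by
  have key : p^2 - t * (p^2 / A + A + q^2 - t) = (p^2 - A^2) * (1 - t / A) + t * (M^2 - q^2) := by
    field_simp
    linear_combination A * ht
  have h1 : 0 ≤ 1 - t / A := by rw [sub_nonneg, div_le_one hA]; exact htA
  nlinarith [mul_nonneg (sub_nonneg.2 hp) h1, mul_nonneg ht0.le (sub_nonneg.2 hq)]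

end Bounds

theorem stmt_3 (A M γ s p q : ℝ) (hA : 1 < A) (hM : M ∈ Set.Ioo (0:ℝ) (A - 1))
    (hγ : γ = A ^ (-(1/2) : ℝ))
    (hs : s = ((2*A + M^2 - M * Real.sqrt (M^2 + 4*A)) / 2) ^ (-(1/2) : ℝ))
    (hp : A ≤ |p|) (hq : |q| ≤ M)
    (B : Matrix (Fin 2) (Fin 2) ℝ)
    (hB : B = !![γ^2 * p^2, γ * p * q; γ * p * q, 1/γ^2 + q^2]) :
    2 * s⁻¹ ^ 2 ≤ B.trace ∧ s⁻¹ ^ 2 * (B.trace - s⁻¹ ^ 2) ≤ B.det := by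
  have hA0 : 0 < A := by linarith
  have hM0 : 0 ≤ M := hM.1.le
  have ht0 : 0 < lowerRoot A M := lowerRoot_pos hA0
  have htA : lowerRoot A M ≤ A := lowerRoot_le hA0 hM0
  have hst : s⁻¹ ^ 2 = lowerRoot A M := by rw [hs]; exact inv_rpow_neg_half_sq ht0.le
  have hγ2 : γ^2 = A⁻¹ := by rw [hγ]; exact rpow_neg_half_sq hA0.le
  have htr : B.trace = p^2 / A + A + q^2 := by
    rw [hB, trace_fin_two_gamma, hγ2, one_div, inv_inv, div_eq_inv_mul]
  have hdet : B.det = p^2 := by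
    rw [hB, det_fin_two_gamma (by rw [hγ]; positivity)]
  have hp2 : A^2 ≤ p^2 := sq_le_sq.2 (by rwa [abs_of_pos hA0])
  have hq2 : q^2 ≤ M^2 := sq_le_sq.2 (by rwa [abs_of_nonneg hM0])
  rw [hst, htr, hdet]
  exact ⟨two_mul_le_trace hA0 htA hp2,
    mul_trace_sub_le_det hA0 ht0 htA (lowerRoot_sq (by positivity)) hp2 hq2⟩
end

section
/- The map ζ(x,y) = (x+y, xy) is a bijection from V''_s = {(x,y) ∈ ℝ² : s⁻² ≤ x ≤ y} onto {(ξ₁,ξ₂) ∈ (ℝ₊*)² : ξ₁ ≥ 2s⁻², ξ₂ ≥ s⁻²(ξ₁ − s⁻²), ξ₂ ≤ ξ₁²/4}, for any fixed s ∈ (0,1). -/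
theorem stmt_5 (s : ℝ) (hs : s ∈ Set.Ioo (0:ℝ) 1) :
    Set.BijOn (fun p : ℝ × ℝ => (p.1 + p.2, p.1 * p.2))
      {p : ℝ × ℝ | s⁻¹ ^ 2 ≤ p.1 ∧ p.1 ≤ p.2}
      {ξ : ℝ × ℝ | 0 < ξ.1 ∧ 0 < ξ.2 ∧ 2 * s⁻¹ ^ 2 ≤ ξ.1 ∧
        s⁻¹ ^ 2 * (ξ.1 - s⁻¹ ^ 2) ≤ ξ.2 ∧ ξ.2 ≤ ξ.1 ^ 2 / 4} := by
  obtain ⟨hs0, hs1⟩ := hs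
  have hc : (0:ℝ) < s⁻¹ ^ 2 := by positivity
  set c := s⁻¹ ^ 2 with hcdef
  refine ⟨?_, ?_, ?_⟩
  · rintro ⟨x, y⟩ ⟨h1, h2⟩
    simp only [Set.mem_setOf_eq] at *
    have hx : 0 < x := lt_of_lt_of_le hc h1
    have hy : 0 < y := lt_of_lt_of_le hx h2
    refine ⟨by linarith, by positivity, by linarith, ?_, ?_⟩
    · nlinarith [mul_nonneg (sub_nonneg.2 h1) (sub_nonneg.2 (h1.trans h2))]
    · nlinarith [sq_nonneg (x - y)]
  · rintro ⟨x, y⟩ ⟨h1, h2⟩ ⟨x', y'⟩ ⟨h1', h2'⟩ h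
    simp only [Prod.mk.injEq] at h
    obtain ⟨hsum, hprod⟩ := h
    have key : (x - x') * (x - y') = 0 := by nlinarith
    rcases mul_eq_zero.1 key with h0 | h0
    · have hx : x = x' := by linarith
      have hy : y = y' := by linarith
      simp [hx, hy]
    · have hx : x = y' := by linarith
      have hy : y = x' := by linarith
      have hxx : x = x' := le_antisymm (by linarith) (by linarith)
      have hyy : y = y' := by linarith
      simp [hxx, hyy]
  · rintro ⟨a, b⟩ ⟨ha, hb, h1, h2, h3⟩
    have hdisc : 0 ≤ a ^ 2 - 4 * b := by linarith
    set d := Real.sqrt (a ^ 2 - 4 * b) with hd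
    have hd0 : 0 ≤ d := Real.sqrt_nonneg _
    have hd2 : d ^ 2 = a ^ 2 - 4 * b := Real.sq_sqrt hdisc
    have hdle : d ≤ a - 2 * c := by
      have h' : 0 ≤ a - 2 * c := by linarith
      nlinarith
    refine ⟨⟨(a - d) / 2, (a + d) / 2⟩, ⟨by linarith, by linarith⟩, ?_⟩
    simp only [Prod.mk.injEq]
    exact ⟨by ring, by nlinarith⟩
end

section
/- Let φ_k be C¹ on an open convex set V ⊆ ℝ² with |∂φ_k/∂u| ≥ A > 1 and |∂φ_k/∂v| ≤ M where 0 < M < A−1. Let γ = A^(−1/2) and define T_k(x,y) = (y/γ, γφ_k(x, y/γ)) on the compressed set V' = {(x, γy) : (x,y) ∈ V}. Then for all (x,y), (x',y') ∈ V' with the segment [(x,y),(x',y')] ⊆ V', one has ‖T_k(x,y) − T_k(x',y')‖² ≥ s⁻² ‖(x,y) − (x',y')‖², with s = ((2A + M² − M√(M²+4A))/2)^(−1/2) < 1. -/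
/-!
Write `z = (x, γ y)`. By the mean value theorem on the convex set `V`,
`φ p - φ p' = a dx + b dv` with `|a| ≥ A` and `|b| ≤ M`, so `T z - T z'` is the image of `z - z'`
under `L = [[0, γ⁻¹], [γ a, b]]`. The form `‖L w‖² - t² ‖w‖²` (i.e. `B - t²`) is positive
semidefinite as soon as `t² + M t ≤ A`, by the determinant criterion for `2 × 2` forms, and the
positive root of `t² + M t = A` is exactly `s⁻¹`.
-/

open Real

noncomputable def expansionRate (A M : ℝ) : ℝ := (√(M ^ 2 + 4 * A) - M) / 2

lemma expansionRate_pos {A : ℝ} (hA : 0 < A) (M : ℝ) : 0 < expansionRate A M := by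
  have hlt : M < √(M ^ 2 + 4 * A) :=
    calc M ≤ |M| := le_abs_self M
      _ = √(M ^ 2) := (sqrt_sq_eq_abs M).symm
      _ < √(M ^ 2 + 4 * A) := sqrt_lt_sqrt (sq_nonneg M) (by linarith)
  unfold expansionRate
  linarith

lemma expansionRate_sq_add_mul {A : ℝ} (hA : 0 ≤ A) (M : ℝ) :
    expansionRate A M ^ 2 + M * expansionRate A M = A := by
  unfold expansionRate
  linear_combination (1 / 4 : ℝ) * sq_sqrt (by positivity : 0 ≤ M ^ 2 + 4 * A)

lemma rpow_neg_half_eq_expansionRate_inv {A : ℝ} (hA : 0 < A) (M : ℝ) :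
    ((2 * A + M ^ 2 - M * √(M ^ 2 + 4 * A)) / 2) ^ (-(1 / 2) : ℝ) = (expansionRate A M)⁻¹ := by
  have hsq : (2 * A + M ^ 2 - M * √(M ^ 2 + 4 * A)) / 2 = expansionRate A M ^ 2 := by
    unfold expansionRate
    linear_combination (-1 / 4 : ℝ) * sq_sqrt (by positivity : 0 ≤ M ^ 2 + 4 * A)
  rw [hsq, rpow_neg (sq_nonneg _), ← sqrt_eq_rpow, sqrt_sq (expansionRate_pos hA M).le]

lemma rpow_neg_half_sq_mul_self {A : ℝ} (hA : 0 < A) : (A ^ (-(1 / 2) : ℝ)) ^ 2 * A = 1 := by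
  rw [rpow_neg hA.le, ← sqrt_eq_rpow, inv_pow, sq_sqrt hA.le, inv_mul_cancel₀ hA.ne']

lemma LinearMapClass.map_prod_eq {F R M : Type*} [Semiring R] [AddCommMonoid M] [Module R M]
    [FunLike F (R × R) M] [LinearMapClass F R (R × R) M] (f : F) (v : R × R) :
    f v = v.1 • f (1, 0) + v.2 • f (0, 1) := by
  rw [← map_smul, ← map_smul, ← map_add]
  simp

lemma quadratic_form_nonneg {p q r : ℝ} (hp : 0 < p) (hdet : q ^ 2 ≤ p * r) (x y : ℝ) :
    0 ≤ p * x ^ 2 + 2 * q * x * y + r * y ^ 2 := by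
  have key : p * (p * x ^ 2 + 2 * q * x * y + r * y ^ 2)
      = (p * x + q * y) ^ 2 + (p * r - q ^ 2) * y ^ 2 := by
    ring
  refine (mul_nonneg_iff_of_pos_left hp).mp ?_
  rw [key]
  have := sub_nonneg.mpr hdet
  positivity

lemma expansion_sq_le {A M t a b : ℝ} (hM : 0 < M) (ht : 0 < t) (htA : t ^ 2 + M * t = A)
    (ha : A ≤ |a|) (hb : |b| ≤ M) (dx dv : ℝ) :
    t ^ 2 * (A * dx ^ 2 + dv ^ 2) ≤ A * dv ^ 2 + (a * dx + b * dv) ^ 2 := by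
  have hA : 0 < A := by rw [← htA]; positivity
  have haA : A ^ 2 ≤ a ^ 2 := by simpa only [sq_abs] using pow_le_pow_left₀ hA.le ha 2
  have hbM : b ^ 2 ≤ M ^ 2 := by simpa only [sq_abs] using pow_le_pow_left₀ (abs_nonneg b) hb 2
  have hdiag : 0 < a ^ 2 - t ^ 2 * A := by nlinarith [mul_pos hA (mul_pos hM ht)]
  have hdet : (a * b) ^ 2 ≤ (a ^ 2 - t ^ 2 * A) * (A + b ^ 2 - t ^ 2) := by
    have hexpand : (a ^ 2 - t ^ 2 * A) * (A + b ^ 2 - t ^ 2) - (a * b) ^ 2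
        = t * (M * a ^ 2 - t * A * (t * M + b ^ 2)) := by
      linear_combination (-(a ^ 2 - t ^ 2 * A)) * htA
    have hworst : t * A * (t * M + b ^ 2) ≤ M * a ^ 2 :=
      calc t * A * (t * M + b ^ 2) ≤ t * A * (t * M + M ^ 2) := by gcongr
        _ = M * A ^ 2 := by rw [← htA]; ring
        _ ≤ M * a ^ 2 := by gcongr
    linarith [mul_nonneg ht.le (sub_nonneg.mpr hworst)]
  linear_combination quadratic_form_nonneg hdiag hdet dx dv

lemma expansion_sq_le_compressed {A M t γ a b : ℝ} (hγ : γ ^ 2 * A = 1) (hM : 0 < M) (ht : 0 < t)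
    (htA : t ^ 2 + M * t = A) (ha : A ≤ |a|) (hb : |b| ≤ M) (dx dv : ℝ) :
    t ^ 2 * (dx ^ 2 + (γ * dv) ^ 2) ≤ dv ^ 2 + (γ * (a * dx + b * dv)) ^ 2 := by
  have := mul_le_mul_of_nonneg_left (expansion_sq_le hM ht htA ha hb dx dv) (sq_nonneg γ)
  linear_combination this + (dv ^ 2 - t ^ 2 * dx ^ 2) * hγ

theorem stmt_7_general (A M γ s : ℝ) (hA : 1 < A) (hM : M ∈ Set.Ioo (0:ℝ) (A - 1))
    (hγ : γ = A ^ (-(1/2) : ℝ))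
    (hs : s = ((2*A + M^2 - M * Real.sqrt (M^2 + 4*A)) / 2) ^ (-(1/2) : ℝ))
    (V : Set (ℝ × ℝ)) (hVconv : Convex ℝ V)
    (φ : ℝ × ℝ → ℝ) (D : ℝ × ℝ → (ℝ × ℝ) →L[ℝ] ℝ)
    (hφ : ∀ p ∈ V, HasFDerivAt φ (D p) p)
    (hDu : ∀ p ∈ V, A ≤ |D p (1, 0)|)
    (hDv : ∀ p ∈ V, |D p (0, 1)| ≤ M)
    (V' : Set (ℝ × ℝ)) (hV' : V' = (fun p : ℝ × ℝ => (p.1, γ * p.2)) '' V)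
    (T : ℝ × ℝ → ℝ × ℝ)
    (hT : ∀ p : ℝ × ℝ, T p = (p.2 / γ, γ * φ (p.1, p.2 / γ))) :
    ∀ z ∈ V', ∀ z' ∈ V', segment ℝ z z' ⊆ V' →
      s⁻¹ ^ 2 * ((z.1 - z'.1) ^ 2 + (z.2 - z'.2) ^ 2) ≤
        ((T z).1 - (T z').1) ^ 2 + ((T z).2 - (T z').2) ^ 2 := by
  obtain ⟨hM0, -⟩ := hM
  have hA0 : 0 < A := by linarith
  have hγA : γ ^ 2 * A = 1 := hγ ▸ rpow_neg_half_sq_mul_self hA0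
  have hγ0 : γ ≠ 0 := by rintro rfl; simp at hγA
  rw [hs, rpow_neg_half_eq_expansionRate_inv hA0, inv_inv]
  subst hV'
  rintro _ ⟨p, hp, rfl⟩ _ ⟨p', hp', rfl⟩ -
  obtain ⟨c, hc, hmvt⟩ := domain_mvt (fun q hq ↦ (hφ q hq).hasFDerivWithinAt) hVconv hp' hp
  have hcV : c ∈ V := hVconv.segment_subset hp' hp hc
  simp only [hT, mul_div_cancel_left₀ _ hγ0]
  rw [← mul_sub, ← mul_sub, hmvt, LinearMapClass.map_prod_eq (D c)]
  simp only [Prod.fst_sub, Prod.snd_sub, smul_eq_mul, mul_comm (_ - _) (D c _)]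
  exact expansion_sq_le_compressed hγA hM0 (expansionRate_pos hA0 M)
    (expansionRate_sq_add_mul hA0.le M) (hDu c hcV) (hDv c hcV) _ _

/-- Proposition `dilatance1`: uniform expansion of the conjugated branch map
T_k(x,y) = (y/γ, γ φ_k(x, y/γ)) on the compressed domain, measured with the
Euclidean (squared) distance. -/
theorem stmt_7 (A M γ s : ℝ) (hA : 1 < A) (hM : M ∈ Set.Ioo (0:ℝ) (A - 1))
    (hγ : γ = A ^ (-(1/2) : ℝ))
    (hs : s = ((2*A + M^2 - M * Real.sqrt (M^2 + 4*A)) / 2) ^ (-(1/2) : ℝ))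
    (V : Set (ℝ × ℝ)) (hV : IsOpen V) (hVconv : Convex ℝ V)
    (φ : ℝ × ℝ → ℝ) (D : ℝ × ℝ → (ℝ × ℝ) →L[ℝ] ℝ)
    (hφ : ∀ p ∈ V, HasFDerivAt φ (D p) p)
    (hDu : ∀ p ∈ V, A ≤ |D p (1, 0)|)
    (hDv : ∀ p ∈ V, |D p (0, 1)| ≤ M)
    (V' : Set (ℝ × ℝ)) (hV' : V' = (fun p : ℝ × ℝ => (p.1, γ * p.2)) '' V)
    (T : ℝ × ℝ → ℝ × ℝ)
    (hT : ∀ p : ℝ × ℝ, T p = (p.2 / γ, γ * φ (p.1, p.2 / γ))) :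
    ∀ z ∈ V', ∀ z' ∈ V', segment ℝ z z' ⊆ V' →
      s⁻¹ ^ 2 * ((z.1 - z'.1) ^ 2 + (z.2 - z'.2) ^ 2) ≤
        ((T z).1 - (T z').1) ^ 2 + ((T z).2 - (T z').2) ^ 2 :=
  stmt_7_general A M γ s hA hM hγ hs V hVconv φ D hφ hDu hDv V' hV' T hT
end

section
/- Let S = 1 + 48/π + 288/π² + (4/π)(1 + 12/π)√(6π + 36), and let a, b be integers with |a| < (|b| − S)/√S. Then with A = |b|, M = |a|, one has 0 < M < A − 1, and the quantity η = s + (8s/(π(1−s)))·3 with s = ((2A + M² − M√(M²+4A))/2)^(−1/2) satisfies η < 1. -/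
/-!
With `K = 24/π`, `η = s + K s/(1 - s) < 1` amounts to `s² - (2 + K) s + 1 > 0`, i.e. `s` lies below the
smaller root `σ⁻¹` of that quadratic; the constant `S` is exactly `σ²`. On the other side, `s` is the
positive root `2/(√(M² + 4A) - M)` of `A x² - M x - 1`, and `s < σ⁻¹` unwinds to `σ² + Mσ < A`, which
is the hypothesis on `a, b`. The same inequality together with `σ ≥ 1` gives `M < A - 1`.
-/

open Real

lemma rpow_sq_neg_half (y : ℝ) : (y ^ 2) ^ (-(1 / 2) : ℝ) = |y|⁻¹ := by
  rw [Real.rpow_neg (sq_nonneg y), ← Real.sqrt_eq_rpow, Real.sqrt_sq_eq_abs]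

lemma quadratic_rpow_neg_half {M A : ℝ} (hM : 0 ≤ M) (hA : 0 < A) :
    ((2 * A + M ^ 2 - M * √(M ^ 2 + 4 * A)) / 2) ^ (-(1 / 2) : ℝ) =
      ((√(M ^ 2 + 4 * A) - M) / 2)⁻¹ := by
  have hsq : √(M ^ 2 + 4 * A) ^ 2 = M ^ 2 + 4 * A := Real.sq_sqrt (by positivity)
  have hlt : M < √(M ^ 2 + 4 * A) := Real.lt_sqrt hM |>.mpr (by linarith)
  have hbase : (2 * A + M ^ 2 - M * √(M ^ 2 + 4 * A)) / 2 = ((√(M ^ 2 + 4 * A) - M) / 2) ^ 2 := by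
    linear_combination (-1 / 4 : ℝ) * hsq
  rw [hbase, rpow_sq_neg_half, abs_of_pos (by linarith)]

lemma lt_sub_one_of_sq_add_mul_lt {σ M A : ℝ} (hσ : 1 ≤ σ) (hM : 0 ≤ M)
    (h : σ ^ 2 + M * σ < A) : M < A - 1 := by
  nlinarith

lemma lt_half_sqrt_sub_of_sq_add_mul_lt {σ M A : ℝ} (hσ : 0 ≤ σ) (hM : 0 ≤ M)
    (h : σ ^ 2 + M * σ < A) : σ < (√(M ^ 2 + 4 * A) - M) / 2 := by
  have : 2 * σ + M < √(M ^ 2 + 4 * A) := Real.lt_sqrt (by positivity) |>.mpr (by nlinarith)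
  linarith

/-- The larger root of `x² - (2 + K) x + 1`. Its inverse is the smaller root, so for `0 ≤ s < 1`
the inequality `s + K s / (1 - s) < 1` holds exactly when `s < (etaThreshold K)⁻¹`. -/
noncomputable def etaThreshold (K : ℝ) : ℝ := 1 + K / 2 + √(K ^ 2 + 4 * K) / 2

lemma etaThreshold_quadratic {K : ℝ} (hK : 0 ≤ K) :
    etaThreshold K ^ 2 - (2 + K) * etaThreshold K + 1 = 0 := by
  have := Real.sq_sqrt (show 0 ≤ K ^ 2 + 4 * K by positivity)
  unfold etaThreshold
  linear_combination (1 / 4 : ℝ) * this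

lemma etaThreshold_sq {K : ℝ} (hK : 0 ≤ K) :
    etaThreshold K ^ 2 = 1 + 2 * K + K ^ 2 / 2 + (1 + K / 2) * √(K ^ 2 + 4 * K) := by
  have := Real.sq_sqrt (show 0 ≤ K ^ 2 + 4 * K by positivity)
  unfold etaThreshold
  linear_combination (1 / 4 : ℝ) * this

lemma one_le_etaThreshold {K : ℝ} (hK : 0 ≤ K) : 1 ≤ etaThreshold K := by
  unfold etaThreshold
  have := Real.sqrt_nonneg (K ^ 2 + 4 * K)
  linarith

lemma add_mul_div_one_sub_lt_one {K s : ℝ} (hK : 0 ≤ K) (hs : 0 ≤ s)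
    (hsσ : s * etaThreshold K < 1) : s + K * s / (1 - s) < 1 := by
  have hσ := one_le_etaThreshold hK
  have hs1 : s < 1 := by nlinarith
  have hquad := etaThreshold_quadratic hK
  -- `(1 - sσ)(σ - s) = σ (s² - (2 + K) s + 1)` since `σ + σ⁻¹ = 2 + K`
  have : K * s < (1 - s) ^ 2 := by
    nlinarith [mul_pos (sub_pos.mpr hsσ) (show 0 < etaThreshold K - s by linarith)]
  have : K * s / (1 - s) < 1 - s := by
    rw [div_lt_iff₀ (by linarith)]
    nlinarith
  linarith

lemma sqrt_sq_add_four_mul_div_pi :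
    √((24 / π) ^ 2 + 4 * (24 / π)) = 4 / π * √(6 * π + 36) := by
  have hπ := Real.pi_pos
  rw [Real.sqrt_eq_iff_mul_self_eq_of_pos (by positivity)]
  rw [mul_mul_mul_comm, Real.mul_self_sqrt (by positivity)]
  field_simp
  ring

lemma sq_etaThreshold_div_pi :
    etaThreshold (24 / π) ^ 2 =
      1 + 48 / π + 288 / π ^ 2 + (4 / π) * (1 + 12 / π) * √(6 * π + 36) := by
  rw [etaThreshold_sq (by positivity), sqrt_sq_add_four_mul_div_pi]
  ring

/-- Verification of hypotheses (H3) and (H5) for the piecewise linear example: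
if |a| < (|b| − S)/√S (and a ≠ 0), then with A = |b|, M = |a| one has
0 < M < A − 1 and η = s + (8s/(π(1−s)))·3 < 1. -/
theorem stmt_18 (S : ℝ)
    (hS : S = 1 + 48/π + 288/π^2 + (4/π) * (1 + 12/π) * Real.sqrt (6*π + 36))
    (a b : ℤ) (ha : a ≠ 0)
    (hab : (|a| : ℝ) < ((|b| : ℝ) - S) / Real.sqrt S)
    (A M s : ℝ) (hA : A = (|b| : ℝ)) (hM : M = (|a| : ℝ))
    (hs : s = ((2*A + M^2 - M * Real.sqrt (M^2 + 4*A)) / 2) ^ (-(1/2) : ℝ)) :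
    0 < M ∧ M < A - 1 ∧ s + 8 * s / (π * (1 - s)) * 3 < 1 := by
  have hK : (0 : ℝ) ≤ 24 / π := by positivity
  set σ := etaThreshold (24 / π)
  have hσ : 1 ≤ σ := one_le_etaThreshold hK
  rw [← sq_etaThreshold_div_pi] at hS
  have hM1 : 1 ≤ M := by
    rw [hM]
    exact_mod_cast Int.one_le_abs ha
  have hAσ : σ ^ 2 + M * σ < A := by
    subst hA hM hS
    rw [Real.sqrt_sq (by linarith), lt_div_iff₀ (by linarith)] at hab
    linarith
  refine ⟨by linarith, lt_sub_one_of_sq_add_mul_lt hσ (by linarith) hAσ, ?_⟩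
  have hy := lt_half_sqrt_sub_of_sq_add_mul_lt (by linarith) (by linarith) hAσ
  rw [quadratic_rpow_neg_half (by linarith) (by nlinarith)] at hs
  have hη := add_mul_div_one_sub_lt_one (s := s) hK (by rw [hs]; exact inv_nonneg.mpr (by linarith))
    (by rw [hs]; exact (inv_mul_lt_one₀ (by linarith)).mpr hy)
  convert hη using 2
  simp only [div_eq_mul_inv, mul_inv]
  ring
end
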